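/- arXiv:2306.03517 — 3 statements merged into one kernel-verified Lean document; each statement's English description precedes it below -/
import Mathlib

section
/- Suppose there exists M ≥ 0 such that ‖A_k‖ ≤ M and ‖b_k‖ ≤ M for every k ≥ 1 (operator norm induced by the Euclidean norm), and suppose that for every fixed s the matrix products A_s · A_{s+1} ⋯ A_t tend to the zero matrix as t → ∞. Then for every fixed s ≥ 0, the increments x(s, t+1) − x(s, t) tend to the zero vector in ℝ^p as t → ∞. -/
/-- For `k ∈ ℕ` let `A_k` be a real `p×p` matrix and `b_k ∈ ℝ^p`.
For integers `0 ≤ s ≤ t` define `x(s,t) ∈ ℝ^p` by the backward recursion `x(t,t) = 𝟙`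
(the all-ones vector in `ℝ^p`) and `x(s−1, t) = b_s + A_s · x(s, t)` for `1 ≤ s ≤ t`.
Suppose there exists `M ≥ 0` such that `‖A_k‖ ≤ M` and `‖b_k‖ ≤ M` for every `k ≥ 1`
(operator norm induced by the Euclidean norm), and suppose that for every fixed `s` the
matrix products `A_s · A_{s+1} ⋯ A_t` tend to the zero matrix as `t → ∞`. Then for every
fixed `s ≥ 0`, the increments `x(s, t+1) − x(s, t)` tend to the zero vector in `ℝ^p`
as `t → ∞`. -/
theorem stmt3 (p : ℕ) (A : ℕ → Matrix (Fin p) (Fin p) ℝ)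
    (b : ℕ → EuclideanSpace ℝ (Fin p))
    (x : ℕ → ℕ → EuclideanSpace ℝ (Fin p))
    (hdiag : ∀ t, x t t = (WithLp.equiv 2 (Fin p → ℝ)).symm 1)
    (hrec : ∀ s t, 1 ≤ s → s ≤ t →
      x (s - 1) t = b s + Matrix.toEuclideanCLM (𝕜 := ℝ) (A s) (x s t))
    (M : ℝ) (hM : 0 ≤ M)
    (hA : ∀ k, 1 ≤ k → ‖Matrix.toEuclideanCLM (𝕜 := ℝ) (A k)‖ ≤ M)
    (hb : ∀ k, 1 ≤ k → ‖b k‖ ≤ M)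
    (hprod : ∀ s : ℕ,
      Filter.Tendsto
        (fun t => Matrix.toEuclideanCLM (𝕜 := ℝ)
          (((List.range (t - s + 1)).map (fun k => A (s + k))).prod))
        Filter.atTop (nhds 0)) :
    ∀ s : ℕ,
      Filter.Tendsto (fun t => x s (t + 1) - x s t) Filter.atTop (nhds 0) := by
  set e : EuclideanSpace ℝ (Fin p) := (WithLp.equiv 2 (Fin p → ℝ)).symm 1 with he
  -- key formula
  have key : ∀ n m, x m (m + n + 1) - x m (m + n)
      = Matrix.toEuclideanCLM (𝕜 := ℝ)
          (((List.range n).map (fun k => A (m + 1 + k))).prod)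
          (x (m + n) (m + n + 1) - e) := by
    intro n
    induction n with
    | zero =>
      intro m
      simp [hdiag m, he]
    | succ n ih =>
      intro m
      have h1 : x m (m + (n + 1) + 1)
          = b (m+1) + Matrix.toEuclideanCLM (𝕜 := ℝ) (A (m+1)) (x (m+1) (m + (n+1) + 1)) := by
        have := hrec (m+1) (m + (n+1) + 1) (by omega) (by omega)
        simpa using this
      have h2 : x m (m + (n + 1))
          = b (m+1) + Matrix.toEuclideanCLM (𝕜 := ℝ) (A (m+1)) (x (m+1) (m + (n+1))) := by
        have := hrec (m+1) (m + (n+1)) (by omega) (by omega)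
        simpa using this
      have hih := ih (m+1)
      have hm : (m+1) + n = m + (n+1) := by omega
      rw [hm] at hih
      have hrange : ((List.range (n+1)).map (fun k => A (m + 1 + k))).prod
          = A (m+1) * ((List.range n).map (fun k => A (m + 1 + 1 + k))).prod := by
        have hcomp : (fun k => A (m + 1 + k)) ∘ Nat.succ = fun k => A (m + 1 + 1 + k) := by
          funext k
          show A (m + 1 + Nat.succ k) = A (m + 1 + 1 + k)
          have hk : m + 1 + Nat.succ k = m + 1 + 1 + k := by omega
          rw [hk]
        rw [List.range_succ_eq_map, List.map_cons, List.prod_cons, List.map_map, hcomp]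
      rw [h1, h2, hrange, map_mul]
      simp only [ContinuousLinearMap.mul_apply]
      rw [add_sub_add_left_eq_sub, ← map_sub, hih]
  -- bound on v_t := x t (t+1) - e
  have hv : ∀ t, ‖x t (t+1) - e‖ ≤ M + M * ‖e‖ + ‖e‖ := by
    intro t
    have h1 : x t (t+1) = b (t+1) + Matrix.toEuclideanCLM (𝕜 := ℝ) (A (t+1)) e := by
      have := hrec (t+1) (t+1) (by omega) (by omega)
      simpa [hdiag (t+1), he] using this
    rw [h1]
    calc ‖b (t+1) + Matrix.toEuclideanCLM (𝕜 := ℝ) (A (t+1)) e - e‖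
        ≤ ‖b (t+1)‖ + ‖Matrix.toEuclideanCLM (𝕜 := ℝ) (A (t+1)) e‖ + ‖e‖ := by
          exact (norm_sub_le _ _).trans (by gcongr; exact norm_add_le _ _)
      _ ≤ M + M * ‖e‖ + ‖e‖ := by
          gcongr
          · exact hb (t+1) (by omega)
          · exact ((Matrix.toEuclideanCLM (𝕜 := ℝ) (A (t+1))).le_opNorm e).trans
              (by gcongr; exact hA (t+1) (by omega))
  intro s
  set C : ℝ := M + M * ‖e‖ + ‖e‖ with hC
  have hC0 : 0 ≤ C := le_trans (norm_nonneg (x 0 1 - e)) (hv 0)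
  -- the product operator tends to 0
  have hP : Filter.Tendsto
      (fun t => Matrix.toEuclideanCLM (𝕜 := ℝ)
        (((List.range (t - s)).map (fun k => A (s + 1 + k))).prod))
      Filter.atTop (nhds 0) := by
    refine (hprod (s+1)).congr' ?_
    filter_upwards [Filter.eventually_ge_atTop (s+1)] with t ht
    have : t - (s+1) + 1 = t - s := by omega
    rw [this]
  have hPC : Filter.Tendsto
      (fun t => ‖Matrix.toEuclideanCLM (𝕜 := ℝ)
        (((List.range (t - s)).map (fun k => A (s + 1 + k))).prod)‖ * C)
      Filter.atTop (nhds 0) := by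
    have h := (hP.norm).mul_const C
    rw [norm_zero, zero_mul] at h
    exact h
  refine squeeze_zero_norm' ?_ hPC
  filter_upwards [Filter.eventually_ge_atTop s] with t ht
  have hts : t = s + (t - s) := by omega
  have hk := key (t - s) s
  rw [← hts] at hk
  rw [hk]
  set P := Matrix.toEuclideanCLM (𝕜 := ℝ) (((List.range (t - s)).map (fun k => A (s + 1 + k))).prod) with hPdef
  calc ‖P (x t (t+1) - e)‖ ≤ ‖P‖ * ‖x t (t+1) - e‖ := P.le_opNorm _
    _ ≤ ‖P‖ * C := mul_le_mul_of_nonneg_left (hv t) (norm_nonneg _)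
end

section
/- Let (Ω, ℱ, ℙ) be a probability space, S a finite set, p ≥ 1 an integer, and Z, Z' : Ω → S random variables. Let b : S → ℝ^p, A : S × S → (p×p real matrices), T : S × S → ℝ, and v : S → ℝ^p. Let W : Ω → ℝ^p be an integrable random vector and define W' := b(Z') + A(Z, Z')·W. Assume: (i) ℙ(Z = i and Z' = j) = T_{i,j} · ℙ(Z = i) for all i, j ∈ S; (ii) 𝔼[W · 1_{Z = i, Z' = j}] = ℙ(Z = i and Z' = j) · v_j for all i, j ∈ S; (iii) 𝔼[W' · 1_{Z = i}] = ℙ(Z = i) · v_i for all i ∈ S. Then for every i ∈ S with ℙ(Z = i) > 0, it holds that v_i = Σ_{j ∈ S} T_{i,j} · (b_j + A_{i,j} · v_j). -/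
/-! Restrict to `{Z = i}`, a set of finite positive mass, and split the stationarity identity
(iii) along the fibres of `Z'`. On `{Z = i, Z' = j}` the integrand is affine in `W` with the
constant coefficients `b j` and `A i j`, so by (ii) its integral is
`ℙ(Z = i, Z' = j) • (b j + A i j v j)`, which by (i) is
`ℙ(Z = i) • T i j • (b j + A i j v j)`. Cancelling `ℙ(Z = i) > 0` gives the claim. -/

open MeasureTheory

section

variable {Ω : Type*} [MeasurableSpace Ω] {μ : Measure Ω}

theorem integral_eq_sum_setIntegral_fiber {E : Type*} [NormedAddCommGroup E] [NormedSpace ℝ E]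
    {S : Type*} [Fintype S] [MeasurableSpace S] [MeasurableSingletonClass S] {Y : Ω → S}
    (hY : Measurable Y) {f : Ω → E} (hf : ∀ j, IntegrableOn f (Y ⁻¹' {j}) μ) :
    ∫ ω, f ω ∂μ = ∑ j, ∫ ω in Y ⁻¹' {j}, f ω ∂μ := by
  rw [← integral_iUnion_fintype (fun j => hY (measurableSet_singleton j))
    (pairwise_disjoint_fiber Y) hf, ← Set.preimage_iUnion, Set.iUnion_of_singleton,
    Set.preimage_univ, setIntegral_univ]

variable {m n : Type*} [Fintype m] [Fintype n] {f : Ω → n → ℝ}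

theorem MeasureTheory.Integrable.matrix_mulVec (A : Matrix m n ℝ) (hf : Integrable f μ) :
    Integrable (fun ω => A.mulVec (f ω)) μ :=
  (LinearMap.toContinuousLinearMap A.mulVecLin).integrable_comp hf

theorem integral_matrix_mulVec (A : Matrix m n ℝ) (hf : Integrable f μ) :
    ∫ ω, A.mulVec (f ω) ∂μ = A.mulVec (∫ ω, f ω ∂μ) :=
  (LinearMap.toContinuousLinearMap A.mulVecLin).integral_comp_comm hf

theorem integral_const_add_mulVec [IsFiniteMeasure μ] (c : m → ℝ) (A : Matrix m n ℝ)
    (hf : Integrable f μ) :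
    ∫ ω, c + A.mulVec (f ω) ∂μ = μ.real Set.univ • c + A.mulVec (∫ ω, f ω ∂μ) := by
  rw [integral_add (integrable_const c) (hf.matrix_mulVec A), integral_const,
    integral_matrix_mulVec A hf]

end

theorem stmt8_general {Ω : Type*} [MeasurableSpace Ω] (μ : Measure Ω)
    {S : Type*} [Fintype S] [MeasurableSpace S] [MeasurableSingletonClass S]
    (p : ℕ)
    (Z Z' : Ω → S) (hZ : Measurable Z) (hZ' : Measurable Z')
    (b : S → Fin p → ℝ) (A : S → S → Matrix (Fin p) (Fin p) ℝ)
    (T : S → S → ℝ) (v : S → Fin p → ℝ)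
    (W : Ω → Fin p → ℝ) (hW : Integrable W μ)
    (hT : ∀ i j, (μ {ω | Z ω = i ∧ Z' ω = j}).toReal = T i j * (μ {ω | Z ω = i}).toReal)
    (hWcond : ∀ i j,
      (∫ ω in {ω | Z ω = i ∧ Z' ω = j}, W ω ∂μ) =
        (μ {ω | Z ω = i ∧ Z' ω = j}).toReal • v j)
    (hstat : ∀ i,
      (∫ ω in {ω | Z ω = i}, (b (Z' ω) + (A (Z ω) (Z' ω)).mulVec (W ω)) ∂μ) =
        (μ {ω | Z ω = i}).toReal • v i) :
    ∀ i, 0 < (μ {ω | Z ω = i}).toReal →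
      v i = ∑ j, T i j • (b j + (A i j).mulVec (v j)) := by
  intro i hi
  set ν := μ.restrict {ω | Z ω = i}
  have : IsFiniteMeasure ν := isFiniteMeasure_restrict.2 (ENNReal.toReal_pos_iff.1 hi).2.ne
  have hfiber (j : S) :
      ν.restrict (Z' ⁻¹' {j}) = μ.restrict {ω | Z ω = i ∧ Z' ω = j} := by
    rw [Measure.restrict_restrict (hZ' (measurableSet_singleton j)), Set.inter_comm]
    rfl
  have hae (j : S) : (fun ω => b (Z' ω) + (A (Z ω) (Z' ω)).mulVec (W ω))
      =ᵐ[ν.restrict (Z' ⁻¹' {j})] fun ω => b j + (A i j).mulVec (W ω) := by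
    rw [hfiber]
    exact ae_restrict_of_forall_mem
      ((hZ (measurableSet_singleton i)).inter (hZ' (measurableSet_singleton j)))
      fun ω (hω : Z ω = i ∧ Z' ω = j) => by simp only [hω.1, hω.2]
  have hpiece (j : S) :
      ∫ ω in Z' ⁻¹' {j}, b (Z' ω) + (A (Z ω) (Z' ω)).mulVec (W ω) ∂ν =
        (μ {ω | Z ω = i ∧ Z' ω = j}).toReal • (b j + (A i j).mulVec (v j)) := by
    rw [integral_congr_ae (hae j), integral_const_add_mulVec _ _ hW.restrict.restrict, hfiber,
      hWcond, measureReal_restrict_apply_univ, Matrix.mulVec_smul, smul_add]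
    rfl
  have hscaled : (μ {ω | Z ω = i}).toReal • v i =
      (μ {ω | Z ω = i}).toReal • ∑ j, T i j • (b j + (A i j).mulVec (v j)) := by
    rw [← hstat i, integral_eq_sum_setIntegral_fiber hZ' fun j =>
      ((integrable_const _).add (hW.restrict.restrict.matrix_mulVec _)).congr (hae j).symm,
      Finset.smul_sum]
    refine Finset.sum_congr rfl fun j _ => ?_
    rw [hpiece j, hT i j, mul_smul, smul_comm]
  exact smul_right_injective _ hi.ne' hscaled

/-- Let `(Ω, ℱ, ℙ)` be a probability space, `S` a finite set, `p ≥ 1` an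
integer, and `Z, Z' : Ω → S` random variables. Let `b : S → ℝ^p`,
`A : S × S → (p×p real matrices)`, `T : S × S → ℝ`, and `v : S → ℝ^p`. Let `W : Ω → ℝ^p`
be an integrable random vector and define `W' := b(Z') + A(Z, Z')·W`. Assume:
(i) `ℙ(Z = i and Z' = j) = T_{i,j} · ℙ(Z = i)` for all `i, j ∈ S`;
(ii) `𝔼[W · 1_{Z = i, Z' = j}] = ℙ(Z = i and Z' = j) · v_j` for all `i, j ∈ S`;
(iii) `𝔼[W' · 1_{Z = i}] = ℙ(Z = i) · v_i` for all `i ∈ S`.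
Then for every `i ∈ S` with `ℙ(Z = i) > 0`, it holds that
`v_i = Σ_{j ∈ S} T_{i,j} · (b_j + A_{i,j} · v_j)`.
(Expectations of `ℝ^p`-valued random variables are componentwise Bochner integrals.) -/
theorem stmt8 {Ω : Type*} [MeasurableSpace Ω] (μ : Measure Ω) [IsProbabilityMeasure μ]
    {S : Type*} [Fintype S] [MeasurableSpace S] [MeasurableSingletonClass S]
    (p : ℕ) (hp : 1 ≤ p)
    (Z Z' : Ω → S) (hZ : Measurable Z) (hZ' : Measurable Z')
    (b : S → Fin p → ℝ) (A : S → S → Matrix (Fin p) (Fin p) ℝ)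
    (T : S → S → ℝ) (v : S → Fin p → ℝ)
    (W : Ω → Fin p → ℝ) (hW : Integrable W μ)
    (hT : ∀ i j, (μ {ω | Z ω = i ∧ Z' ω = j}).toReal = T i j * (μ {ω | Z ω = i}).toReal)
    (hWcond : ∀ i j,
      (∫ ω in {ω | Z ω = i ∧ Z' ω = j}, W ω ∂μ) =
        (μ {ω | Z ω = i ∧ Z' ω = j}).toReal • v j)
    (hstat : ∀ i,
      (∫ ω in {ω | Z ω = i}, (b (Z' ω) + (A (Z ω) (Z' ω)).mulVec (W ω)) ∂μ) =
        (μ {ω | Z ω = i}).toReal • v i) :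
    ∀ i, 0 < (μ {ω | Z ω = i}).toReal →
      v i = ∑ j, T i j • (b j + (A i j).mulVec (v j)) :=
  stmt8_general μ p Z Z' hZ hZ' b A T v W hW hT hWcond hstat
end

section
/- Let θ > 0, suppose Σ_i |u_i| > 0 and max_i |D_{i,i}| > 0, and define σ(θ) = θ^{−1} · ln(Σ_i |u_i|) and ρ(θ) = θ^{−1} · ln(max_i |D_{i,i}|). Then for every natural number m, |a · Γ^m · b| ≤ exp(θ·σ(θ) + θ·ρ(θ)·m); in particular, if a · Γ^m · b is a positive real number and m ≥ 1, then (1/(θ m)) · ln(a · Γ^m · b) ≤ σ(θ)/m + ρ(θ). -/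
/-!
Diagonalising `Γ = U D U⁻¹` gives `a Γ^m b = ∑ᵢ uᵢ Dᵢᵢ^m`, so the triangle inequality bounds
`|a Γ^m b|` by `(∑ᵢ |uᵢ|) · (maxᵢ |Dᵢᵢ|)^m`, which is `exp (θσ + θρm)` by the choice of `σ` and `ρ`.
Taking logarithms of this bound gives the effective-bandwidth form.
-/

open scoped Matrix
open Finset

namespace Matrix

variable {ι R : Type*} [Fintype ι] [DecidableEq ι]

theorem isUnit_conj_pow [CommRing R] {U : Matrix ι ι R} (hU : IsUnit U) (A : Matrix ι ι R)
    (m : ℕ) : (U * A * U⁻¹) ^ m = U * A ^ m * U⁻¹ := by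
  rw [← hU.unit_spec, ← coe_units_inv, Units.conj_pow]

theorem IsDiag.pow_eq_diagonal [Semiring R] {D : Matrix ι ι R} (hD : D.IsDiag) (m : ℕ) :
    D ^ m = diagonal fun i => D i i ^ m := by
  conv_lhs => rw [← hD.diagonal_diag, diagonal_pow]
  rfl

theorem vecMul_mul_diagonal_mul_dotProduct [CommSemiring R] (x y : ι → R)
    (A B : Matrix ι ι R) (d : ι → R) :
    (x ᵥ* (A * diagonal d * B)) ⬝ᵥ y = ∑ i, (x ᵥ* A) i * (B *ᵥ y) i * d i := by
  rw [← vecMul_vecMul, ← vecMul_vecMul, ← dotProduct_mulVec]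
  simp only [dotProduct, vecMul_diagonal, mul_right_comm]

end Matrix

theorem norm_sum_mul_pow_le {ι 𝕜 : Type*} [NormedField 𝕜] (s : Finset ι) (u d : ι → 𝕜)
    {M : ℝ} (hd : ∀ i ∈ s, ‖d i‖ ≤ M) (m : ℕ) :
    ‖∑ i ∈ s, u i * d i ^ m‖ ≤ (∑ i ∈ s, ‖u i‖) * M ^ m := by
  calc ‖∑ i ∈ s, u i * d i ^ m‖
      ≤ ∑ i ∈ s, ‖u i‖ * ‖d i‖ ^ m := by
        simpa only [norm_mul, norm_pow] using norm_sum_le s fun i => u i * d i ^ m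
    _ ≤ ∑ i ∈ s, ‖u i‖ * M ^ m := by
        gcongr with i hi
        exact hd i hi
    _ = (∑ i ∈ s, ‖u i‖) * M ^ m := (sum_mul ..).symm

theorem Real.mul_log_le_div_add_of_le_exp {θ σ ρ r m : ℝ} (hθ : 0 < θ) (hm : 0 < m)
    (hr : 0 < r) (h : r ≤ Real.exp (θ * σ + θ * ρ * m)) :
    1 / (θ * m) * Real.log r ≤ σ / m + ρ := by
  have hlog : Real.log r ≤ θ * σ + θ * ρ * m := (Real.log_le_iff_le_exp hr).mpr h
  calc 1 / (θ * m) * Real.log r ≤ 1 / (θ * m) * (θ * σ + θ * ρ * m) := by gcongr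
    _ = σ / m + ρ := by field_simp

/-- Let `Γ` be an `n×n` complex matrix that is diagonalizable:
`Γ = U · D · U^{−1}` for an invertible `n×n` complex matrix `U` and a diagonal matrix
`D`. For a row vector `a ∈ ℂ^n` and a column vector `b ∈ ℂ^n`, write
`u_i = (aU)_i · (U^{−1}b)_i`. Let `θ > 0`, suppose `Σ_i |u_i| > 0` and
`max_i |D_{i,i}| > 0`, and define `σ(θ) = θ^{−1} · ln(Σ_i |u_i|)` and
`ρ(θ) = θ^{−1} · ln(max_i |D_{i,i}|)`. Then for every natural number `m`,
`|a · Γ^m · b| ≤ exp(θ·σ(θ) + θ·ρ(θ)·m)`; in particular, if `a · Γ^m · b` is a positive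
real number and `m ≥ 1`, then `(1/(θ m)) · ln(a · Γ^m · b) ≤ σ(θ)/m + ρ(θ)`. -/
theorem stmt12 (n : ℕ) (hn : 0 < n) (Γ U D : Matrix (Fin n) (Fin n) ℂ)
    (hU : IsUnit U) (hD : D.IsDiag) (hΓ : Γ = U * D * U⁻¹)
    (a b : Fin n → ℂ) (u : Fin n → ℂ)
    (hu : ∀ i, u i = (a ᵥ* U) i * (U⁻¹ *ᵥ b) i)
    (θ : ℝ) (hθ : 0 < θ)
    (hsum : 0 < ∑ i, ‖u i‖)
    (hmax : 0 < Finset.univ.sup' ⟨⟨0, hn⟩, Finset.mem_univ _⟩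
      (fun i => ‖D i i‖))
    (σ ρ : ℝ)
    (hσ : σ = θ⁻¹ * Real.log (∑ i, ‖u i‖))
    (hρ : ρ = θ⁻¹ * Real.log (Finset.univ.sup' ⟨⟨0, hn⟩, Finset.mem_univ _⟩
      (fun i => ‖D i i‖))) :
    (∀ m : ℕ, ‖(a ᵥ* Γ ^ m) ⬝ᵥ b‖ ≤ Real.exp (θ * σ + θ * ρ * m)) ∧
      (∀ m : ℕ, 1 ≤ m → ∀ r : ℝ, 0 < r → (a ᵥ* Γ ^ m) ⬝ᵥ b = (r : ℂ) →
        1 / (θ * m) * Real.log r ≤ σ / m + ρ) := by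
  set M := univ.sup' ⟨⟨0, hn⟩, mem_univ _⟩ fun i => ‖D i i‖
  have hθσ : θ * σ = Real.log (∑ i, ‖u i‖) := by rw [hσ]; field_simp
  have hθρ : θ * ρ = Real.log M := by rw [hρ]; field_simp
  have envelope (m : ℕ) : ‖(a ᵥ* Γ ^ m) ⬝ᵥ b‖ ≤ Real.exp (θ * σ + θ * ρ * m) := by
    rw [hΓ, Matrix.isUnit_conj_pow hU, hD.pow_eq_diagonal,
      Matrix.vecMul_mul_diagonal_mul_dotProduct, Real.exp_add, hθσ, hθρ, mul_comm (Real.log M),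
      Real.exp_nat_mul, Real.exp_log hsum, Real.exp_log hmax]
    simp only [← hu]
    exact norm_sum_mul_pow_le _ _ _ (fun i _ => le_sup' (fun i => ‖D i i‖) (mem_univ i)) m
  refine ⟨envelope, fun m hm r hr hr_eq => ?_⟩
  refine Real.mul_log_le_div_add_of_le_exp hθ (by exact_mod_cast hm) hr ?_
  simpa only [hr_eq, Complex.norm_real, Real.norm_eq_abs, abs_of_pos hr] using envelope m
end
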